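/- arXiv:math-ph/0505019 — 7 statements merged into one kernel-verified Lean document; each statement's English description precedes it below -/
import Mathlib

section
/- Define f : 𝔻 → ℂ by f(Z) = exp((Tr Z + 2)/(Tr Z − 2)), where 𝔻 := {Z ∈ Mat₂ₓ₂(ℂ) : I − Z†Z is positive definite}. Then: (a) |Tr Z| < 2 for every Z ∈ 𝔻, so f is well defined; (b) f is holomorphic (complex differentiable as a function of the matrix entries) on the open set 𝔻; (c) |f(Z)| < 1 for every Z ∈ 𝔻; and (d) there is no continuous function g : 𝔻̄ → ℂ on the closure 𝔻̄ := {Z : I − Z†Z positive semidefinite} with g(Z) = f(Z) for all Z ∈ 𝔻. In particular f is a bounded holomorphic function on 𝔻 that does not belong to the uniform closure of polynomials on 𝔻̄. -/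
open Matrix Filter
open scoped ComplexOrder

attribute [local instance] Matrix.normedAddCommGroup Matrix.normedSpace

/-- The open domain `𝔻 = {Z : I − Zᴴ Z ≻ 0}`. -/
def matrixBall : Set (Matrix (Fin 2) (Fin 2) ℂ) :=
  {Z | ((1 : Matrix (Fin 2) (Fin 2) ℂ) - Zᴴ * Z).PosDef}

/-- Its closure `𝔻̄ = {Z : I − Zᴴ Z ⪰ 0}`. -/
def matrixBallClosed : Set (Matrix (Fin 2) (Fin 2) ℂ) :=
  {Z | ((1 : Matrix (Fin 2) (Fin 2) ℂ) - Zᴴ * Z).PosSemidef}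

/-- `f(Z) = exp((Tr Z + 2)/(Tr Z − 2))`. -/
noncomputable def expTraceFn (Z : Matrix (Fin 2) (Fin 2) ℂ) : ℂ :=
  Complex.exp ((Matrix.trace Z + 2) / (Matrix.trace Z - 2))

/-! ### Auxiliary lemmas -/

lemma colsum_lt {Z : Matrix (Fin 2) (Fin 2) ℂ} (h : Z ∈ matrixBall) (j : Fin 2) :
    ‖Z 0 j‖ ^ 2 + ‖Z 1 j‖ ^ 2 < 1 := by
  have h2 := Matrix.PosDef.dotProduct_mulVec_pos h (x := Pi.single j 1) (fun hc => by simpa using congrFun hc j)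
  have e : star (Pi.single j 1 : Fin 2 → ℂ) ⬝ᵥ
      (((1 : Matrix (Fin 2) (Fin 2) ℂ) - Zᴴ * Z) *ᵥ Pi.single j 1) =
      1 - ((starRingEnd ℂ) (Z 0 j) * Z 0 j + (starRingEnd ℂ) (Z 1 j) * Z 1 j) := by
    simp [Matrix.mulVec_single, Matrix.sub_mulVec, dotProduct, Matrix.mul_apply,
      Pi.single_apply, Fin.sum_univ_two, Matrix.one_mulVec, Matrix.conjTranspose_apply,
      Matrix.one_apply, apply_ite]
  rw [e, Complex.lt_def] at h2
  have hre := h2.1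
  have habs : ∀ z : ℂ, ((starRingEnd ℂ) z * z).re = ‖z‖ ^ 2 := by
    intro z
    simp [Complex.mul_re, Complex.conj_re, Complex.conj_im, ← Complex.normSq_eq_norm_sq,
      Complex.normSq_apply]
  simp only [Complex.sub_re, Complex.add_re, Complex.one_re, Complex.zero_re, habs] at hre
  linarith

lemma entry_lt {Z : Matrix (Fin 2) (Fin 2) ℂ} (h : Z ∈ matrixBall) (j : Fin 2) :
    ‖Z j j‖ < 1 := by
  have h0 := colsum_lt h 0
  have h1 := colsum_lt h 1
  have hj : ‖Z j j‖ ^ 2 < 1 := by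
    fin_cases j
    · show ‖Z 0 0‖ ^ 2 < 1
      nlinarith [norm_nonneg (Z 1 0)]
    · show ‖Z 1 1‖ ^ 2 < 1
      nlinarith [norm_nonneg (Z 0 1)]
  nlinarith [norm_nonneg (Z j j)]

lemma trace_eq (Z : Matrix (Fin 2) (Fin 2) ℂ) : Matrix.trace Z = Z 0 0 + Z 1 1 := by
  simp [Matrix.trace, Matrix.diag, Fin.sum_univ_two]

lemma trace_lt {Z : Matrix (Fin 2) (Fin 2) ℂ} (h : Z ∈ matrixBall) :
    ‖Matrix.trace Z‖ < 2 := by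
  have h0 := entry_lt h 0
  have h1 := entry_lt h 1
  rw [trace_eq]
  calc ‖Z 0 0 + Z 1 1‖ ≤ _ := norm_add_le _ _
    _ < 2 := by linarith

lemma trace_diff : Differentiable ℂ (Matrix.trace : Matrix (Fin 2) (Fin 2) ℂ → ℂ) :=
  (Matrix.traceLinearMap (Fin 2) ℂ ℂ).toContinuousLinearMap.differentiable

lemma expTraceFn_diffOn (s : Set (Matrix (Fin 2) (Fin 2) ℂ))
    (hne : ∀ Z ∈ s, Matrix.trace Z - 2 ≠ 0) : DifferentiableOn ℂ expTraceFn s := by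
  have hdiv : DifferentiableOn ℂ
      (fun Z : Matrix (Fin 2) (Fin 2) ℂ => (Matrix.trace Z + 2) / (Matrix.trace Z - 2)) s := by
    simp only [div_eq_mul_inv]
    exact ((trace_diff.differentiableOn : DifferentiableOn ℂ _ s).add_const 2).mul
      (((trace_diff.differentiableOn : DifferentiableOn ℂ _ s).sub_const 2).inv hne)
  exact hdiv.cexp

lemma abs_exp_lt (t : ℂ) (h : ‖t‖ < 2) :
    ‖Complex.exp ((t + 2) / (t - 2))‖ < 1 := by
  rw [Complex.norm_exp, Real.exp_lt_one_iff]
  have hw : t - 2 ≠ 0 := by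
    intro hc
    rw [sub_eq_zero] at hc
    simp [hc] at h
  have hpos : 0 < Complex.normSq (t - 2) := Complex.normSq_pos.2 hw
  have hnum : ((t + 2) * (starRingEnd ℂ) (t - 2)).re = Complex.normSq t - 4 := by
    simp [Complex.mul_re, Complex.conj_re, Complex.conj_im, Complex.normSq_apply,
      Complex.add_re, Complex.sub_re, Complex.add_im, Complex.sub_im]
    ring
  have hlt : Complex.normSq t < 4 := by
    have := Complex.sq_norm t
    nlinarith [norm_nonneg t]
  rw [Complex.div_re]
  have h1 : (t + 2).re * (t - 2).re + (t + 2).im * (t - 2).im = Complex.normSq t - 4 := by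
    rw [← hnum]; simp [Complex.mul_re, Complex.conj_re, Complex.conj_im]
  rw [← add_div, h1]
  exact div_neg_of_neg_of_pos (by linarith) hpos

lemma smul_one_mem {c : ℂ} (h : ‖c‖ < 1) :
    c • (1 : Matrix (Fin 2) (Fin 2) ℂ) ∈ matrixBall := by
  have key : (1 : Matrix (Fin 2) (Fin 2) ℂ) - (c • (1 : Matrix (Fin 2) (Fin 2) ℂ))ᴴ *
      (c • (1 : Matrix (Fin 2) (Fin 2) ℂ)) =
      Matrix.diagonal (fun _ => 1 - (starRingEnd ℂ) c * c) := by
    rw [Matrix.conjTranspose_smul, Matrix.conjTranspose_one]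
    rw [Matrix.smul_mul, Matrix.mul_smul, one_mul, smul_smul]
    rw [← Matrix.smul_one_eq_diagonal, sub_smul, one_smul]
    rfl
  show Matrix.PosDef _
  rw [key]
  apply Matrix.PosDef.diagonal
  intro i
  have heq : (1 : ℂ) - (starRingEnd ℂ) c * c = ((1 - Complex.normSq c : ℝ) : ℂ) := by
    rw [← Complex.normSq_eq_conj_mul_self]; push_cast; ring
  rw [heq, Complex.zero_lt_real]
  have := Complex.sq_norm c
  nlinarith [norm_nonneg c]

lemma trace_smul_one (c : ℂ) : Matrix.trace (c • (1 : Matrix (Fin 2) (Fin 2) ℂ)) = 2 * c := by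
  rw [Matrix.trace_smul, Matrix.trace_one]
  simp
  ring

lemma expTraceFn_smul_one {c : ℂ} (hc : c ≠ 1) :
    expTraceFn (c • (1 : Matrix (Fin 2) (Fin 2) ℂ)) = Complex.exp ((c + 1) / (c - 1)) := by
  unfold expTraceFn
  rw [trace_smul_one]
  congr 1
  rw [show (2 * c + 2) = 2 * (c + 1) by ring, show (2 * c - 2) = 2 * (c - 1) by ring,
    mul_div_mul_left _ _ (two_ne_zero)]

/-! ### The two sequences approaching `1` on which `f` has different limits -/

noncomputable def aseq (n : ℕ) : ℂ :=
  (Real.pi * n * Complex.I) / (Real.pi * n * Complex.I - 1)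

noncomputable def bseq (n : ℕ) : ℂ := ((n : ℂ) - 1) / ((n : ℂ) + 1)

lemma aden_ne (n : ℕ) : (Real.pi * n * Complex.I - 1 : ℂ) ≠ 0 := by
  intro hc
  have := congrArg Complex.re hc
  simp [Complex.sub_re, Complex.mul_re, Complex.I_re, Complex.I_im] at this

lemma aden_im (n : ℕ) : (Real.pi * n * Complex.I - 1 : ℂ).im = Real.pi * n := by
  simp [Complex.sub_im, Complex.mul_im, Complex.I_re, Complex.I_im]

lemma aseq_abs (n : ℕ) : ‖aseq n‖ < 1 := by
  unfold aseq
  rw [norm_div, div_lt_one (norm_pos_iff.mpr (aden_ne n))]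
  · apply lt_of_pow_lt_pow_left₀ 2 (norm_nonneg _)
    rw [Complex.sq_norm, Complex.sq_norm, Complex.normSq_apply, Complex.normSq_apply]
    have h1 := aden_im n
    have h2 : (Real.pi * n * Complex.I - 1 : ℂ).re = -1 := by
      simp [Complex.sub_re, Complex.mul_re, Complex.I_re, Complex.I_im]
    have h3 : (Real.pi * n * Complex.I : ℂ).re = 0 := by
      simp [Complex.mul_re, Complex.I_re, Complex.I_im]
    have h4 : (Real.pi * n * Complex.I : ℂ).im = Real.pi * n := by
      simp [Complex.mul_im, Complex.I_re, Complex.I_im]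
    rw [h1, h2, h3, h4]
    nlinarith

lemma aseq_ne_one (n : ℕ) : aseq n ≠ 1 := by
  unfold aseq
  intro hc
  rw [div_eq_one_iff_eq (aden_ne n)] at hc
  have := congrArg Complex.re hc
  simp [Complex.sub_re, Complex.mul_re, Complex.I_re, Complex.I_im] at this

lemma div_div_cancel_aux (a b c : ℂ) (hc : c ≠ 0) : a / c / (b / c) = a / b := by
  rw [div_div_div_eq, mul_comm c b, ← div_div_div_eq, div_self hc, div_one]

lemma aseq_ratio (n : ℕ) :
    (aseq n + 1) / (aseq n - 1) = 2 * Real.pi * n * Complex.I - 1 := by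
  unfold aseq
  have h := aden_ne n
  rw [div_add_one h, div_sub_one h, div_div_cancel_aux _ _ _ h]
  rw [show (Real.pi * n * Complex.I + (Real.pi * n * Complex.I - 1)) =
    (2 * Real.pi * n * Complex.I - 1) * 1 by ring,
    show (Real.pi * n * Complex.I - (Real.pi * n * Complex.I - 1)) = 1 by ring, mul_one,
    div_one]

lemma aseq_exp (n : ℕ) :
    Complex.exp ((aseq n + 1) / (aseq n - 1)) = Complex.exp (-1) := by
  rw [aseq_ratio]
  rw [show (2 * Real.pi * n * Complex.I - 1 : ℂ) = -1 + (n : ℂ) * (2 * Real.pi * Complex.I) by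
    push_cast; ring]
  rw [Complex.exp_add]
  have := Complex.exp_int_mul_two_pi_mul_I (n : ℤ)
  push_cast at this
  rw [this, mul_one]

lemma bden_ne (n : ℕ) : ((n : ℂ) + 1) ≠ 0 := by
  have : ((n : ℂ) + 1) = ((n + 1 : ℕ) : ℂ) := by push_cast; ring
  rw [this]
  exact Nat.cast_ne_zero.mpr (Nat.succ_ne_zero n)

lemma bseq_ne_one (n : ℕ) : bseq n ≠ 1 := by
  unfold bseq
  intro hc
  rw [div_eq_one_iff_eq (bden_ne n)] at hc
  have := congrArg Complex.re hc
  simp at this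
  linarith

lemma bseq_ratio (n : ℕ) : (bseq n + 1) / (bseq n - 1) = -(n : ℂ) := by
  unfold bseq
  have h := bden_ne n
  rw [div_add_one h, div_sub_one h, div_div_cancel_aux _ _ _ h]
  rw [show ((n : ℂ) - 1 + ((n : ℂ) + 1)) = 2 * n by ring,
    show ((n : ℂ) - 1 - ((n : ℂ) + 1)) = -2 by ring]
  rw [show (2 * (n : ℂ)) / (-2) = -(n : ℂ) by
    rw [div_eq_iff (by norm_num : (-2 : ℂ) ≠ 0)]; ring]

lemma bseq_abs {n : ℕ} (hn : 1 ≤ n) : ‖bseq n‖ < 1 := by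
  unfold bseq
  have : ((n : ℂ) - 1) / ((n : ℂ) + 1) = ((((n : ℝ) - 1) / ((n : ℝ) + 1) : ℝ) : ℂ) := by
    push_cast; ring
  rw [this, Complex.norm_real, Real.norm_eq_abs, abs_div]
  have h1 : (1 : ℝ) ≤ (n : ℝ) := by exact_mod_cast hn
  rw [abs_of_nonneg (by linarith), abs_of_pos (by linarith)]
  rw [div_lt_one (by linarith)]
  linarith

lemma aseq_tendsto : Tendsto aseq atTop (nhds 1) := by
  rw [tendsto_iff_norm_sub_tendsto_zero]
  apply squeeze_zero' (Eventually.of_forall fun n => norm_nonneg _)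
    (g := fun n : ℕ => 1 / (n : ℝ)) _ tendsto_one_div_atTop_nhds_zero_nat
  filter_upwards [eventually_ge_atTop 1] with n hn
  have key : aseq n - 1 = 1 / (Real.pi * n * Complex.I - 1) := by
    unfold aseq
    rw [div_sub' (aden_ne n)]
    congr 1
    ring
  rw [key]
  simp only [norm_div, norm_one]
  have h1 : (n : ℝ) ≤ ‖Real.pi * n * Complex.I - 1‖ := by
    calc (n : ℝ) ≤ Real.pi * n := by nlinarith [Real.pi_gt_three, Nat.cast_nonneg (α := ℝ) n]
    _ = |(Real.pi * n * Complex.I - 1 : ℂ).im| := by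
        rw [aden_im]; rw [abs_of_nonneg (by positivity)]
    _ ≤ _ := Complex.abs_im_le_norm _
  have hn' : (0 : ℝ) < n := by exact_mod_cast hn
  exact one_div_le_one_div_of_le hn' h1

lemma bseq_tendsto : Tendsto bseq atTop (nhds 1) := by
  rw [tendsto_iff_norm_sub_tendsto_zero]
  apply squeeze_zero' (Eventually.of_forall fun n => norm_nonneg _)
    (g := fun n : ℕ => 2 / (n : ℝ)) _ (tendsto_const_div_atTop_nhds_zero_nat 2)
  filter_upwards [eventually_ge_atTop 1] with n hn
  have key : bseq n - 1 = -2 / ((n : ℂ) + 1) := by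
    unfold bseq
    rw [div_sub' (bden_ne n)]
    congr 1
    ring
  rw [key]
  simp only [norm_div]
  have h2 : ‖(-2 : ℂ)‖ = 2 := by simp
  have h3 : ((n : ℂ) + 1) = (((n : ℝ) + 1 : ℝ) : ℂ) := by push_cast; ring
  rw [h2, h3, Complex.norm_real, Real.norm_eq_abs, abs_of_pos (by positivity)]
  have hn' : (1 : ℝ) ≤ n := by exact_mod_cast hn
  apply div_le_div_of_nonneg_left (by norm_num) (by linarith) (by linarith)

lemma ball_subset_closed : matrixBall ⊆ matrixBallClosed := fun _ h => h.posSemidef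

lemma one_mem_closed : (1 : Matrix (Fin 2) (Fin 2) ℂ) ∈ matrixBallClosed := by
  show Matrix.PosSemidef _
  rw [Matrix.conjTranspose_one, one_mul, sub_self]
  exact Matrix.PosSemidef.zero

lemma smul_one_tendsto {c : ℕ → ℂ} (h : Tendsto c atTop (nhds 1)) :
    Tendsto (fun n => c n • (1 : Matrix (Fin 2) (Fin 2) ℂ)) atTop
      (nhds (1 : Matrix (Fin 2) (Fin 2) ℂ)) := by
  have hcont : Continuous fun z : ℂ => z • (1 : Matrix (Fin 2) (Fin 2) ℂ) :=
    continuous_id.smul continuous_const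
  have := (hcont.tendsto 1).comp h
  rwa [one_smul] at this

lemma exp_neg_tendsto : Tendsto (fun n : ℕ => Complex.exp (-(n : ℂ))) atTop (nhds 0) := by
  rw [tendsto_zero_iff_norm_tendsto_zero]
  have heq : ∀ n : ℕ, ‖Complex.exp (-(n : ℂ))‖ = Real.exp (-(n : ℝ)) := by
    intro n
    rw [Complex.norm_exp]
    norm_num
  simp only [heq]
  exact Real.tendsto_exp_atBot.comp (tendsto_neg_atBot_iff.mpr tendsto_natCast_atTop_atTop)

/-! ### Main theorem -/

/-- (a) `|Tr Z| < 2` on `𝔻`, so `f(Z) = exp((Tr Z + 2)/(Tr Z − 2))` is well defined;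
(b) `f` is holomorphic on the open set `𝔻`; (c) `|f| < 1` on `𝔻`; (d) `f` has no
continuous extension to `𝔻̄`.  In particular `f ∈ H^∞(𝔻)` does not lie in the uniform
closure of polynomials on `𝔻̄`. -/
theorem expTraceFn_bounded_holomorphic_no_continuous_extension :
    (∀ Z ∈ matrixBall, ‖Matrix.trace Z‖ < 2) ∧
    DifferentiableOn ℂ expTraceFn matrixBall ∧
    (∀ Z ∈ matrixBall, ‖expTraceFn Z‖ < 1) ∧
    ¬ ∃ g : Matrix (Fin 2) (Fin 2) ℂ → ℂ,
        ContinuousOn g matrixBallClosed ∧ ∀ Z ∈ matrixBall, g Z = expTraceFn Z := by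
  have hne : ∀ Z ∈ matrixBall, Matrix.trace Z - 2 ≠ 0 := by
    intro Z hZ hc
    rw [sub_eq_zero] at hc
    have := trace_lt hZ
    rw [hc] at this
    simp at this
  refine ⟨fun Z hZ => trace_lt hZ, expTraceFn_diffOn _ hne, fun Z hZ => abs_exp_lt _ (trace_lt hZ),
    ?_⟩
  rintro ⟨g, hg, hgf⟩
  -- first sequence: `f` is constantly `exp (-1)`
  have hZa : Tendsto (fun n => aseq n • (1 : Matrix (Fin 2) (Fin 2) ℂ)) atTop
      (nhdsWithin 1 matrixBallClosed) :=
    tendsto_nhdsWithin_of_tendsto_nhds_of_eventually_within _ (smul_one_tendsto aseq_tendsto)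
      (Eventually.of_forall fun n => ball_subset_closed (smul_one_mem (aseq_abs n)))
  have hga : Tendsto (fun n => g (aseq n • (1 : Matrix (Fin 2) (Fin 2) ℂ))) atTop
      (nhds (g 1)) := ((hg 1 one_mem_closed).tendsto).comp hZa
  have hgaval : ∀ n, g (aseq n • (1 : Matrix (Fin 2) (Fin 2) ℂ)) = Complex.exp (-1) := by
    intro n
    rw [hgf _ (smul_one_mem (aseq_abs n)), expTraceFn_smul_one (aseq_ne_one n), aseq_exp n]
  have h1 : g 1 = Complex.exp (-1) := by
    apply tendsto_nhds_unique hga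
    simp only [hgaval]
    exact tendsto_const_nhds
  -- second sequence: `f` tends to `0`
  have hZb : Tendsto (fun n => bseq n • (1 : Matrix (Fin 2) (Fin 2) ℂ)) atTop
      (nhdsWithin 1 matrixBallClosed) := by
    apply tendsto_nhdsWithin_of_tendsto_nhds_of_eventually_within _
      (smul_one_tendsto bseq_tendsto)
    filter_upwards [eventually_ge_atTop 1] with n hn
    exact ball_subset_closed (smul_one_mem (bseq_abs hn))
  have hgb : Tendsto (fun n => g (bseq n • (1 : Matrix (Fin 2) (Fin 2) ℂ))) atTop
      (nhds (g 1)) := ((hg 1 one_mem_closed).tendsto).comp hZb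
  have hgbval : ∀ᶠ n in atTop,
      g (bseq n • (1 : Matrix (Fin 2) (Fin 2) ℂ)) = Complex.exp (-(n : ℂ)) := by
    filter_upwards [eventually_ge_atTop 1] with n hn
    rw [hgf _ (smul_one_mem (bseq_abs hn)), expTraceFn_smul_one (bseq_ne_one n), bseq_ratio n]
  have h0 : g 1 = 0 := tendsto_nhds_unique (hgb.congr' hgbval) exp_neg_tendsto
  rw [h1] at h0
  exact Complex.exp_ne_zero _ h0
end

section
/- Let C, D ∈ Mat₂ₓ₂(ℂ) satisfy D D† = I + C C†. Then for every Z ∈ Mat₂ₓ₂(ℂ) with I − Z†Z positive semidefinite, the matrix C Z + D is invertible (equivalently det(C Z + D) ≠ 0). -/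
open Matrix
open scoped ComplexOrder

lemma star_dot_mulVec' (M : Matrix (Fin 2) (Fin 2) ℂ) (x y : Fin 2 → ℂ) :
    star x ⬝ᵥ (M *ᵥ y) = star (Mᴴ *ᵥ x) ⬝ᵥ y := by
  rw [star_mulVec, conjTranspose_conjTranspose, dotProduct_mulVec]

lemma inner_eq_dot (a b : Fin 2 → ℂ) :
    (inner ℂ ((WithLp.equiv 2 (Fin 2 → ℂ)).symm a) ((WithLp.equiv 2 (Fin 2 → ℂ)).symm b) : ℂ)
      = star a ⬝ᵥ b :=
  (EuclideanSpace.inner_toLp_toLp a b).trans (dotProduct_comm _ _)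

lemma dot_self_eq_norm_sq (a : Fin 2 → ℂ) :
    star a ⬝ᵥ a = ((‖((WithLp.equiv 2 (Fin 2 → ℂ)).symm a)‖ ^ 2 : ℝ) : ℂ) := by
  rw [← inner_eq_dot, inner_self_eq_norm_sq_to_K]
  norm_cast

lemma one_sub_mul_conjTranspose_posSemidef (Z : Matrix (Fin 2) (Fin 2) ℂ)
    (hZ : ((1 : Matrix (Fin 2) (Fin 2) ℂ) - Zᴴ * Z).PosSemidef) :
    ((1 : Matrix (Fin 2) (Fin 2) ℂ) - Z * Zᴴ).PosSemidef := by
  refine PosSemidef.of_dotProduct_mulVec_nonneg ?_ ?_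
  · unfold Matrix.IsHermitian
    simp [conjTranspose_sub, conjTranspose_mul]
  intro x
  set u : Fin 2 → ℂ := Zᴴ *ᵥ x with hu
  have expand : star x ⬝ᵥ ((1 - Z * Zᴴ) *ᵥ x) = star x ⬝ᵥ x - star u ⬝ᵥ u := by
    rw [sub_mulVec, dotProduct_sub, one_mulVec, ← mulVec_mulVec,
      star_dot_mulVec' Z x (Zᴴ *ᵥ x)]
  rw [expand]
  have hZu : star (Z *ᵥ u) ⬝ᵥ (Z *ᵥ u) ≤ star u ⬝ᵥ u := by
    have h2 := hZ.dotProduct_mulVec_nonneg u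
    rw [sub_mulVec, dotProduct_sub, one_mulVec, ← mulVec_mulVec,
      star_dot_mulVec' Zᴴ u (Z *ᵥ u), conjTranspose_conjTranspose, sub_nonneg] at h2
    exact h2
  -- pass to real norms in Euclidean space
  set X := (WithLp.equiv 2 (Fin 2 → ℂ)).symm x with hX
  set U := (WithLp.equiv 2 (Fin 2 → ℂ)).symm u with hU
  set W := (WithLp.equiv 2 (Fin 2 → ℂ)).symm (Z *ᵥ u) with hW
  have hWU : ‖W‖ ^ 2 ≤ ‖U‖ ^ 2 := by
    rw [dot_self_eq_norm_sq, dot_self_eq_norm_sq] at hZu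
    exact_mod_cast hZu
  have hinner : (inner ℂ X W : ℂ) = ((‖U‖ ^ 2 : ℝ) : ℂ) := by
    rw [inner_eq_dot, star_dot_mulVec' Z x u, ← hu, dot_self_eq_norm_sq]
  have hcs : ‖(inner ℂ X W : ℂ)‖ ≤ ‖X‖ * ‖W‖ := norm_inner_le_norm X W
  rw [hinner] at hcs
  have hcs' : ‖U‖ ^ 2 ≤ ‖X‖ * ‖W‖ := by
    rwa [Complex.norm_real, Real.norm_eq_abs, abs_of_nonneg (sq_nonneg _)] at hcs
  have hfin : ‖U‖ ^ 2 ≤ ‖X‖ ^ 2 := by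
    nlinarith [norm_nonneg X, norm_nonneg U, norm_nonneg W, sq_nonneg (‖U‖ - ‖W‖),
      sq_nonneg (‖X‖ - ‖U‖), sq_nonneg (‖X‖ - ‖W‖)]
  rw [dot_self_eq_norm_sq, dot_self_eq_norm_sq, ← hX, ← hU, ← Complex.ofReal_sub]
  rw [Complex.zero_le_real]
  linarith

/-- If `D Dᴴ = I + C Cᴴ` then for every `Z` with `I − Zᴴ Z ⪰ 0` the matrix
`C Z + D` is invertible, equivalently `det (C Z + D) ≠ 0`. -/
theorem CZ_add_D_invertible (C D : Matrix (Fin 2) (Fin 2) ℂ)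
    (h : D * Dᴴ = 1 + C * Cᴴ) (Z : Matrix (Fin 2) (Fin 2) ℂ)
    (hZ : ((1 : Matrix (Fin 2) (Fin 2) ℂ) - Zᴴ * Z).PosSemidef) :
    IsUnit (C * Z + D) ∧ (C * Z + D).det ≠ 0 := by
  have key := one_sub_mul_conjTranspose_posSemidef Z hZ
  have hdet : (C * Z + D).det ≠ 0 := by
    intro hd
    have hd' : ((C * Z + D)ᴴ).det = 0 := by rw [det_conjTranspose, hd, star_zero]
    obtain ⟨v, hv, hveq⟩ := Matrix.exists_mulVec_eq_zero_iff.2 hd'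
    set q : Fin 2 → ℂ := Cᴴ *ᵥ v with hq
    have hexp : Zᴴ *ᵥ q + Dᴴ *ᵥ v = 0 := by
      have h0 : ((C * Z + D)ᴴ) *ᵥ v = 0 := hveq
      rwa [conjTranspose_add, conjTranspose_mul, add_mulVec, ← mulVec_mulVec] at h0
    have hDv : Dᴴ *ᵥ v = -(Zᴴ *ᵥ q) := eq_neg_of_add_eq_zero_right hexp
    have h1 : star (Dᴴ *ᵥ v) ⬝ᵥ (Dᴴ *ᵥ v) = star v ⬝ᵥ v + star q ⬝ᵥ q := by
      rw [← star_dot_mulVec' D v (Dᴴ *ᵥ v), mulVec_mulVec, h, add_mulVec, one_mulVec,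
        dotProduct_add, ← mulVec_mulVec, star_dot_mulVec' C v (Cᴴ *ᵥ v), ← hq]
    have h2 : star (Zᴴ *ᵥ q) ⬝ᵥ (Zᴴ *ᵥ q) ≤ star q ⬝ᵥ q := by
      have h3 := key.dotProduct_mulVec_nonneg q
      rw [sub_mulVec, dotProduct_sub, one_mulVec, ← mulVec_mulVec,
        star_dot_mulVec' Z q (Zᴴ *ᵥ q), sub_nonneg] at h3
      exact h3
    rw [hDv, star_neg, neg_dotProduct, dotProduct_neg, neg_neg] at h1
    have h4 : star v ⬝ᵥ v ≤ 0 := by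
      rw [h1] at h2
      exact add_le_iff_nonpos_left.mp h2
    have h5 : star v ⬝ᵥ v = 0 := le_antisymm h4 (dotProduct_star_self_nonneg v)
    exact hv (dotProduct_star_self_eq_zero.mp h5)
  exact ⟨(Matrix.isUnit_iff_isUnit_det _).mpr hdet.isUnit, hdet⟩
end

section
/- Let M = [[A, B], [C, D]] ∈ Mat₄ₓ₄(ℂ) in 2×2 blocks satisfy both M† η M = η and M η M† = η, where η = diag(I₂, −I₂). Then for every Z ∈ 𝔻 := {Z ∈ Mat₂ₓ₂(ℂ) : I − Z†Z positive definite}, the matrix C Z + D is invertible and σ(Z) := (A Z + B)(C Z + D)⁻¹ again belongs to 𝔻. Thus the conformal group acts on the bounded symmetric domain 𝔻 by the fractional linear transformations σ. -/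
open Matrix
open scoped ComplexOrder

lemma posDef_conjTranspose_mul_mul_same' {n : Type*} [Fintype n] [DecidableEq n]
    {P Q : Matrix n n ℂ} (hP : P.PosDef) (hQ : IsUnit Q) : (Qᴴ * P * Q).PosDef := by
  exact hP.conjTranspose_mul_mul_same (Matrix.mulVec_injective_iff_isUnit.mpr hQ)

/-- If `M = [[A,B],[C,D]]` satisfies `Mᴴ η M = η` and `M η Mᴴ = η` with
`η = diag(I₂, −I₂)`, then for every `Z ∈ 𝔻 = {Z : I − Zᴴ Z ≻ 0}` the matrix
`C Z + D` is invertible and `σ(Z) = (AZ+B)(CZ+D)⁻¹` again lies in `𝔻`. -/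
theorem mobius_maps_ball_to_ball (A B C D : Matrix (Fin 2) (Fin 2) ℂ)
    (h1 : (fromBlocks A B C D)ᴴ * fromBlocks 1 0 0 (-1) * fromBlocks A B C D =
      fromBlocks 1 0 0 (-1))
    (h2 : fromBlocks A B C D * fromBlocks 1 0 0 (-1) * (fromBlocks A B C D)ᴴ =
      fromBlocks 1 0 0 (-1))
    (Z : Matrix (Fin 2) (Fin 2) ℂ)
    (hZ : ((1 : Matrix (Fin 2) (Fin 2) ℂ) - Zᴴ * Z).PosDef) :
    IsUnit (C * Z + D) ∧
    ((1 : Matrix (Fin 2) (Fin 2) ℂ) -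
      ((A * Z + B) * (C * Z + D)⁻¹)ᴴ * ((A * Z + B) * (C * Z + D)⁻¹)).PosDef := by
  -- extract block equations from h1
  rw [fromBlocks_conjTranspose, fromBlocks_multiply, fromBlocks_multiply] at h1
  have e11 : Aᴴ * A - Cᴴ * C = 1 := by
    have := congrArg Matrix.toBlocks₁₁ h1
    simp [toBlocks_fromBlocks₁₁] at this
    linear_combination (norm := noncomm_ring) this
  have e12 : Aᴴ * B - Cᴴ * D = 0 := by
    have := congrArg Matrix.toBlocks₁₂ h1
    simp [toBlocks_fromBlocks₁₂] at this
    linear_combination (norm := noncomm_ring) this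
  have e21 : Bᴴ * A - Dᴴ * C = 0 := by
    have := congrArg Matrix.toBlocks₂₁ h1
    simp [toBlocks_fromBlocks₂₁] at this
    linear_combination (norm := noncomm_ring) this
  have e22 : Dᴴ * D - Bᴴ * B = 1 := by
    have := congrArg Matrix.toBlocks₂₂ h1
    simp [toBlocks_fromBlocks₂₂] at this
    linear_combination (norm := noncomm_ring) -this
  -- key identity
  have hkey : (C * Z + D)ᴴ * (C * Z + D) - (A * Z + B)ᴴ * (A * Z + B)
      = 1 - Zᴴ * Z := by
    have expand : (C * Z + D)ᴴ * (C * Z + D) - (A * Z + B)ᴴ * (A * Z + B)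
        = -(Zᴴ * (Aᴴ * A - Cᴴ * C) * Z) - Zᴴ * (Aᴴ * B - Cᴴ * D)
          - (Bᴴ * A - Dᴴ * C) * Z + (Dᴴ * D - Bᴴ * B) := by
      simp only [conjTranspose_add, conjTranspose_mul]
      noncomm_ring
    rw [expand, e11, e12, e21, e22]
    noncomm_ring
  have hsum : (C * Z + D)ᴴ * (C * Z + D)
      = (1 - Zᴴ * Z) + (A * Z + B)ᴴ * (A * Z + B) := by
    linear_combination (norm := noncomm_ring) hkey
  have hposQ : ((C * Z + D)ᴴ * (C * Z + D)).PosDef := by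
    rw [hsum]
    exact hZ.add_posSemidef (posSemidef_conjTranspose_mul_self _)
  have hU : IsUnit (C * Z + D) := by
    have hdet : (C * Z + D)ᴴ.det * (C * Z + D).det ≠ 0 := by
      rw [← det_mul]
      exact hposQ.det_pos.ne'
    exact (isUnit_iff_isUnit_det _).mpr (isUnit_iff_ne_zero.mpr (right_ne_zero_of_mul hdet))
  refine ⟨hU, ?_⟩
  set Q := C * Z + D with hQdef
  have hQinv : Q * Q⁻¹ = 1 := mul_nonsing_inv Q ((isUnit_iff_isUnit_det _).mp hU)
  have key2 : (1 : Matrix (Fin 2) (Fin 2) ℂ) -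
      ((A * Z + B) * Q⁻¹)ᴴ * ((A * Z + B) * Q⁻¹)
      = (Q⁻¹)ᴴ * (1 - Zᴴ * Z) * Q⁻¹ := by
    have h1' : (1 : Matrix (Fin 2) (Fin 2) ℂ) = (Q⁻¹)ᴴ * (Qᴴ * Q) * Q⁻¹ := by
      rw [show (Q⁻¹)ᴴ * (Qᴴ * Q) * Q⁻¹ = (Q * Q⁻¹)ᴴ * (Q * Q⁻¹) by
        simp only [conjTranspose_mul]; noncomm_ring]
      rw [hQinv]
      simp
    calc (1 : Matrix (Fin 2) (Fin 2) ℂ) -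
        ((A * Z + B) * Q⁻¹)ᴴ * ((A * Z + B) * Q⁻¹)
        = (Q⁻¹)ᴴ * (Qᴴ * Q - (A * Z + B)ᴴ * (A * Z + B)) * Q⁻¹ := by
          rw [conjTranspose_mul]
          nth_rewrite 1 [h1']
          noncomm_ring
      _ = (Q⁻¹)ᴴ * (1 - Zᴴ * Z) * Q⁻¹ := by rw [hkey]
  rw [key2]
  exact posDef_conjTranspose_mul_mul_same' hZ (isUnit_nonsing_inv_iff.mpr hU)
end

section
/- Let M = [[A, B], [C, D]] ∈ Mat₄ₓ₄(ℂ) in 2×2 blocks satisfy both M† η M = η and M η M† = η, where η = diag(I₂, −I₂). Then for every unitary Z ∈ Mat₂ₓ₂(ℂ) (i.e. Z†Z = I), the matrix C Z + D is invertible and σ(Z) := (A Z + B)(C Z + D)⁻¹ is again unitary. Thus the Möbius action of the conformal group preserves the Šilov boundary U(2) of the domain 𝔻. -/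
open Matrix

/-- If `M = [[A,B],[C,D]]` satisfies `Mᴴ η M = η` and `M η Mᴴ = η` with
`η = diag(I₂, −I₂)`, then for every unitary `Z` (i.e. `Zᴴ Z = I`) the matrix
`C Z + D` is invertible and `σ(Z) = (AZ+B)(CZ+D)⁻¹` is again unitary: the
Möbius action preserves the Šilov boundary `U(2)`. -/
theorem mobius_preserves_shilov_boundary (A B C D : Matrix (Fin 2) (Fin 2) ℂ)
    (h1 : (fromBlocks A B C D)ᴴ * fromBlocks 1 0 0 (-1) * fromBlocks A B C D =
      fromBlocks 1 0 0 (-1))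
    (h2 : fromBlocks A B C D * fromBlocks 1 0 0 (-1) * (fromBlocks A B C D)ᴴ =
      fromBlocks 1 0 0 (-1))
    (Z : Matrix (Fin 2) (Fin 2) ℂ) (hZ : Zᴴ * Z = 1) :
    IsUnit (C * Z + D) ∧
    ((A * Z + B) * (C * Z + D)⁻¹)ᴴ * ((A * Z + B) * (C * Z + D)⁻¹) = 1 := by
  set M := fromBlocks A B C D with hM
  -- expand h1 into block equations
  have h1' : fromBlocks (Aᴴ*A - Cᴴ*C) (Aᴴ*B - Cᴴ*D) (Bᴴ*A - Dᴴ*C) (Bᴴ*B - Dᴴ*D)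
      = fromBlocks (1 : Matrix (Fin 2) (Fin 2) ℂ) 0 0 (-1) := by
    rw [← h1, hM, fromBlocks_conjTranspose, fromBlocks_multiply, fromBlocks_multiply]
    congr 1 <;> noncomm_ring
  have eCC : Cᴴ*C = Aᴴ*A - 1 := by
    have := congrArg Matrix.toBlocks₁₁ h1'
    simp [toBlocks_fromBlocks₁₁] at this
    linear_combination (norm := noncomm_ring) -this
  have eCD : Cᴴ*D = Aᴴ*B := by
    have := congrArg Matrix.toBlocks₁₂ h1'
    simp [toBlocks_fromBlocks₁₂] at this
    linear_combination (norm := noncomm_ring) -this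
  have eDC : Dᴴ*C = Bᴴ*A := by
    have := congrArg Matrix.toBlocks₂₁ h1'
    simp [toBlocks_fromBlocks₂₁] at this
    linear_combination (norm := noncomm_ring) -this
  have eDD : Dᴴ*D = Bᴴ*B + 1 := by
    have := congrArg Matrix.toBlocks₂₂ h1'
    simp [toBlocks_fromBlocks₂₂] at this
    linear_combination (norm := noncomm_ring) -this
  set P := A*Z + B with hP
  set Q := C*Z + D with hQ
  have key : Qᴴ * Q = Pᴴ * P := by
    calc Qᴴ * Q = Zᴴ*(Cᴴ*C)*Z + Zᴴ*(Cᴴ*D) + (Dᴴ*C)*Z + Dᴴ*D := by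
          rw [hQ, conjTranspose_add, conjTranspose_mul]; noncomm_ring
      _ = Zᴴ*(Aᴴ*A)*Z - (Zᴴ*Z) + Zᴴ*(Aᴴ*B) + (Bᴴ*A)*Z + (Bᴴ*B + 1) := by
          rw [eCC, eCD, eDC, eDD]; noncomm_ring
      _ = Pᴴ * P := by
          rw [hZ, hP, conjTranspose_add, conjTranspose_mul]; noncomm_ring
  -- M is invertible
  have hMunit : IsUnit M := by
    have : (fromBlocks 1 0 0 (-1) * Mᴴ * fromBlocks 1 0 0 (-1)) * M = 1 := by
      rw [mul_assoc, mul_assoc, ← mul_assoc Mᴴ, h1]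
      rw [fromBlocks_multiply]
      simp [fromBlocks_one]
    exact (Matrix.isUnit_iff_isUnit_det _).mpr (Matrix.isUnit_det_of_left_inverse this)
  have hMinj : Function.Injective M.mulVec := mulVec_injective_iff_isUnit.mpr hMunit
  -- Q is invertible
  have hQunit : IsUnit Q := by
    rw [Matrix.isUnit_iff_isUnit_det, isUnit_iff_ne_zero]
    intro hdet
    obtain ⟨v, hv0, hv⟩ := (Matrix.exists_mulVec_eq_zero_iff).mpr hdet
    have hPv : P *ᵥ v = 0 := by
      have h0 : (Pᴴ * P) *ᵥ v = 0 := by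
        rw [← key, ← mulVec_mulVec, hv, mulVec_zero]
      have h2' : star (P *ᵥ v) ⬝ᵥ (P *ᵥ v) = 0 := by
        rw [star_mulVec, ← dotProduct_mulVec, mulVec_mulVec, h0, dotProduct_zero]
      open scoped ComplexOrder in
      exact dotProduct_star_self_eq_zero.mp h2'
    have hMv : M *ᵥ (Sum.elim (Z *ᵥ v) v) = 0 := by
      rw [hM, fromBlocks_mulVec]
      simp only [Sum.elim_comp_inl, Sum.elim_comp_inr]
      have ht : A *ᵥ (Z *ᵥ v) + B *ᵥ v = 0 := by
        rw [mulVec_mulVec, ← add_mulVec, ← hP, hPv]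
      have hb : C *ᵥ (Z *ᵥ v) + D *ᵥ v = 0 := by
        rw [mulVec_mulVec, ← add_mulVec, ← hQ, hv]
      rw [ht, hb]; ext (i|i) <;> simp
    have := hMinj (by rw [hMv, mulVec_zero] : M *ᵥ (Sum.elim (Z *ᵥ v) v) = M *ᵥ 0)
    apply hv0
    ext i
    have := congrFun this (Sum.inr i)
    simpa using this
  refine ⟨hQunit, ?_⟩
  have hQinv : Q * Q⁻¹ = 1 := mul_nonsing_inv Q (isUnit_iff_isUnit_det Q |>.mp hQunit)
  calc (P * Q⁻¹)ᴴ * (P * Q⁻¹) = (Q⁻¹)ᴴ * (Pᴴ * P) * Q⁻¹ := by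
        rw [conjTranspose_mul]; noncomm_ring
    _ = (Q * Q⁻¹)ᴴ * (Q * Q⁻¹) := by rw [← key, conjTranspose_mul]; noncomm_ring
    _ = 1 := by rw [hQinv]; simp
end

section
/- Let M = [[A_M, B_M], [C_M, D_M]] and N = [[A_N, B_N], [C_N, D_N]] be matrices in Mat₄ₓ₄(ℂ), each satisfying X† η X = η and X η X† = η with η = diag(I₂, −I₂). Then for every Z ∈ 𝔻 := {Z ∈ Mat₂ₓ₂(ℂ) : I − Z†Z positive definite}, one has the cocycle identity C_{MN} Z + D_{MN} = (C_M σ_N(Z) + D_M)(C_N Z + D_N), where [[A_{MN}, B_{MN}], [C_{MN}, D_{MN}]] := M N, and the composition law σ_{MN}(Z) = σ_M(σ_N(Z)), where σ_X(Z) := (A_X Z + B_X)(C_X Z + D_X)⁻¹. -/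
open Matrix
open scoped ComplexOrder

/-- The fractional linear (Möbius) transformation associated to a 4×4 block matrix
`P = [[A,B],[C,D]]`: `σ_P(Z) = (A Z + B)(C Z + D)⁻¹`. -/
noncomputable def mobius (P : Matrix (Fin 2 ⊕ Fin 2) (Fin 2 ⊕ Fin 2) ℂ)
    (Z : Matrix (Fin 2) (Fin 2) ℂ) : Matrix (Fin 2) (Fin 2) ℂ :=
  (P.toBlocks₁₁ * Z + P.toBlocks₁₂) * (P.toBlocks₂₁ * Z + P.toBlocks₂₂)⁻¹

/-- Conjugation of a positive definite matrix by an invertible matrix is positive definite. -/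
lemma posDef_conj_aux {n : Type*} [Fintype n] [DecidableEq n] {A B : Matrix n n ℂ}
    (hA : A.PosDef) (hB : IsUnit B) : (Bᴴ * A * B).PosDef := by
  exact hA.conjTranspose_mul_mul_same (Matrix.mulVec_injective_iff_isUnit.mpr hB)

/-- The core computation: the η-relations on blocks give the fundamental identity
for `(C Z + D)ᴴ (C Z + D)`. -/
lemma key_identity (A B C D Z : Matrix (Fin 2) (Fin 2) ℂ)
    (hCC : Cᴴ * C = Aᴴ * A - 1) (hCD : Cᴴ * D = Aᴴ * B)
    (hDC : Dᴴ * C = Bᴴ * A) (hDD : Dᴴ * D = 1 + Bᴴ * B) :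
    (C * Z + D)ᴴ * (C * Z + D) = (1 - Zᴴ * Z) + (A * Z + B)ᴴ * (A * Z + B) := by
  simp only [conjTranspose_add, conjTranspose_mul]
  calc (Zᴴ * Cᴴ + Dᴴ) * (C * Z + D)
      = Zᴴ * (Cᴴ * C) * Z + Zᴴ * (Cᴴ * D) + (Dᴴ * C) * Z + Dᴴ * D := by noncomm_ring
    _ = Zᴴ * (Aᴴ * A - 1) * Z + Zᴴ * (Aᴴ * B) + (Bᴴ * A) * Z + (1 + Bᴴ * B) := by
        rw [hCC, hCD, hDC, hDD]
    _ = (1 - Zᴴ * Z) + (Zᴴ * Aᴴ + Bᴴ) * (A * Z + B) := by noncomm_ring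

/-- Main block lemma: invertibility of `C Z + D` and membership of `σ(Z)` in `𝔻`. -/
lemma key_lemma (A B C D Z : Matrix (Fin 2) (Fin 2) ℂ)
    (hCC : Cᴴ * C = Aᴴ * A - 1) (hCD : Cᴴ * D = Aᴴ * B)
    (hDC : Dᴴ * C = Bᴴ * A) (hDD : Dᴴ * D = 1 + Bᴴ * B)
    (hZ : ((1 : Matrix (Fin 2) (Fin 2) ℂ) - Zᴴ * Z).PosDef) :
    IsUnit (C * Z + D) ∧
    ((1 : Matrix (Fin 2) (Fin 2) ℂ) -
      ((A * Z + B) * (C * Z + D)⁻¹)ᴴ * ((A * Z + B) * (C * Z + D)⁻¹)).PosDef := by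
  set K := C * Z + D with hKdef
  have hKK : Kᴴ * K = (1 - Zᴴ * Z) + (A * Z + B)ᴴ * (A * Z + B) :=
    key_identity A B C D Z hCC hCD hDC hDD
  have hpos : (Kᴴ * K).PosDef := by
    rw [hKK]
    exact hZ.add_posSemidef (posSemidef_conjTranspose_mul_self _)
  have hK : IsUnit K := by
    have h1 : (Kᴴ * K).det ≠ 0 := hpos.det_pos.ne'
    rw [det_mul] at h1
    exact (isUnit_iff_isUnit_det _).2 (Ne.isUnit fun h => h1 (by rw [h, mul_zero]))
  refine ⟨hK, ?_⟩
  haveI := hK.invertible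
  have hinv : IsUnit K⁻¹ := Matrix.isUnit_nonsing_inv_iff.mpr hK
  have e : (1 : Matrix (Fin 2) (Fin 2) ℂ) -
      ((A * Z + B) * K⁻¹)ᴴ * ((A * Z + B) * K⁻¹) =
      (K⁻¹)ᴴ * (1 - Zᴴ * Z) * K⁻¹ := by
    have h1 : (K⁻¹)ᴴ * (Kᴴ * K) * K⁻¹ = 1 := by
      rw [conjTranspose_nonsing_inv]
      calc (Kᴴ)⁻¹ * (Kᴴ * K) * K⁻¹ = (Kᴴ)⁻¹ * Kᴴ * (K * K⁻¹) := by noncomm_ring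
        _ = 1 := by rw [Matrix.inv_mul_of_invertible, Matrix.mul_inv_of_invertible, one_mul]
    calc (1 : Matrix (Fin 2) (Fin 2) ℂ) - ((A * Z + B) * K⁻¹)ᴴ * ((A * Z + B) * K⁻¹)
        = (K⁻¹)ᴴ * (Kᴴ * K) * K⁻¹ - (K⁻¹)ᴴ * ((A * Z + B)ᴴ * (A * Z + B)) * K⁻¹ := by
          rw [h1, conjTranspose_mul]; noncomm_ring
      _ = (K⁻¹)ᴴ * (1 - Zᴴ * Z) * K⁻¹ := by rw [hKK]; noncomm_ring
  rw [e]
  exact posDef_conj_aux hZ hinv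

/-- Extract the block relations from `Xᴴ η X = η`. -/
lemma eta_blocks (X : Matrix (Fin 2 ⊕ Fin 2) (Fin 2 ⊕ Fin 2) ℂ)
    (h : Xᴴ * (fromBlocks 1 0 0 (-1)) * X = fromBlocks 1 0 0 (-1)) :
    X.toBlocks₂₁ᴴ * X.toBlocks₂₁ = X.toBlocks₁₁ᴴ * X.toBlocks₁₁ - 1 ∧
    X.toBlocks₂₁ᴴ * X.toBlocks₂₂ = X.toBlocks₁₁ᴴ * X.toBlocks₁₂ ∧
    X.toBlocks₂₂ᴴ * X.toBlocks₂₁ = X.toBlocks₁₂ᴴ * X.toBlocks₁₁ ∧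
    X.toBlocks₂₂ᴴ * X.toBlocks₂₂ = 1 + X.toBlocks₁₂ᴴ * X.toBlocks₁₂ := by
  set A := X.toBlocks₁₁; set B := X.toBlocks₁₂; set C := X.toBlocks₂₁; set D := X.toBlocks₂₂
  rw [show X = fromBlocks A B C D from (fromBlocks_toBlocks X).symm,
    fromBlocks_conjTranspose, fromBlocks_multiply, fromBlocks_multiply] at h
  have h11 := congrArg toBlocks₁₁ h
  have h12 := congrArg toBlocks₁₂ h
  have h21 := congrArg toBlocks₂₁ h
  have h22 := congrArg toBlocks₂₂ h
  simp only [toBlocks_fromBlocks₁₁, toBlocks_fromBlocks₁₂, toBlocks_fromBlocks₂₁,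
    toBlocks_fromBlocks₂₂, Matrix.mul_zero, Matrix.zero_mul, add_zero, zero_add,
    Matrix.mul_one, Matrix.mul_neg, Matrix.neg_mul] at h11 h12 h21 h22
  refine ⟨?_, ?_, ?_, ?_⟩
  · linear_combination (norm := noncomm_ring) -h11
  · linear_combination (norm := noncomm_ring) -h12
  · linear_combination (norm := noncomm_ring) -h21
  · linear_combination (norm := noncomm_ring) -h22

/-- For `M, N` with `Xᴴ η X = η` and `X η Xᴴ = η` (`η = diag(I₂,−I₂)`) and `Z ∈ 𝔻`,
one has the cocycle identity
`C_{MN} Z + D_{MN} = (C_M σ_N(Z) + D_M)(C_N Z + D_N)` and the composition law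
`σ_{MN}(Z) = σ_M(σ_N(Z))`. -/
theorem mobius_cocycle_and_composition
    (M N : Matrix (Fin 2 ⊕ Fin 2) (Fin 2 ⊕ Fin 2) ℂ)
    (η : Matrix (Fin 2 ⊕ Fin 2) (Fin 2 ⊕ Fin 2) ℂ)
    (hη : η = fromBlocks 1 0 0 (-1))
    (hM1 : Mᴴ * η * M = η) (hM2 : M * η * Mᴴ = η)
    (hN1 : Nᴴ * η * N = η) (hN2 : N * η * Nᴴ = η)
    (Z : Matrix (Fin 2) (Fin 2) ℂ)
    (hZ : ((1 : Matrix (Fin 2) (Fin 2) ℂ) - Zᴴ * Z).PosDef) :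
    (M * N).toBlocks₂₁ * Z + (M * N).toBlocks₂₂ =
      (M.toBlocks₂₁ * mobius N Z + M.toBlocks₂₂) * (N.toBlocks₂₁ * Z + N.toBlocks₂₂) ∧
    mobius (M * N) Z = mobius M (mobius N Z) := by
  rw [hη] at hM1 hN1
  obtain ⟨hn1, hn2, hn3, hn4⟩ := eta_blocks N hN1
  obtain ⟨hm1, hm2, hm3, hm4⟩ := eta_blocks M hM1
  set AN := N.toBlocks₁₁; set BN := N.toBlocks₁₂; set CN := N.toBlocks₂₁; set DN := N.toBlocks₂₂
  set AM := M.toBlocks₁₁; set BM := M.toBlocks₁₂; set CM := M.toBlocks₂₁; set DM := M.toBlocks₂₂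
  obtain ⟨hKN, hWD⟩ := key_lemma AN BN CN DN Z hn1 hn2 hn3 hn4 hZ
  set W := mobius N Z with hWdef
  have hWeq : W = (AN * Z + BN) * (CN * Z + DN)⁻¹ := rfl
  obtain ⟨hKM, _⟩ := key_lemma AM BM CM DM W hm1 hm2 hm3 hm4 hWD
  haveI := hKN.invertible
  haveI := hKM.invertible
  -- clearing the denominator for σ_N
  have hclear : W * (CN * Z + DN) = AN * Z + BN := by
    rw [hWeq, Matrix.mul_assoc, Matrix.inv_mul_of_invertible, Matrix.mul_one]
  -- blocks of the product
  have hMN : M * N = fromBlocks (AM * AN + BM * CN) (AM * BN + BM * DN)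
      (CM * AN + DM * CN) (CM * BN + DM * DN) := by
    conv_lhs => rw [show M = fromBlocks AM BM CM DM from (fromBlocks_toBlocks M).symm,
      show N = fromBlocks AN BN CN DN from (fromBlocks_toBlocks N).symm]
    rw [fromBlocks_multiply]
  have hb11 : (M * N).toBlocks₁₁ = AM * AN + BM * CN := by rw [hMN, toBlocks_fromBlocks₁₁]
  have hb12 : (M * N).toBlocks₁₂ = AM * BN + BM * DN := by rw [hMN, toBlocks_fromBlocks₁₂]
  have hb21 : (M * N).toBlocks₂₁ = CM * AN + DM * CN := by rw [hMN, toBlocks_fromBlocks₂₁]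
  have hb22 : (M * N).toBlocks₂₂ = CM * BN + DM * DN := by rw [hMN, toBlocks_fromBlocks₂₂]
  have cocycle : (M * N).toBlocks₂₁ * Z + (M * N).toBlocks₂₂ =
      (CM * W + DM) * (CN * Z + DN) := by
    rw [hb21, hb22]
    calc (CM * AN + DM * CN) * Z + (CM * BN + DM * DN)
        = CM * (AN * Z + BN) + DM * (CN * Z + DN) := by noncomm_ring
      _ = CM * (W * (CN * Z + DN)) + DM * (CN * Z + DN) := by rw [hclear]
      _ = (CM * W + DM) * (CN * Z + DN) := by noncomm_ring
  have cocycleA : (M * N).toBlocks₁₁ * Z + (M * N).toBlocks₁₂ =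
      (AM * W + BM) * (CN * Z + DN) := by
    rw [hb11, hb12]
    calc (AM * AN + BM * CN) * Z + (AM * BN + BM * DN)
        = AM * (AN * Z + BN) + BM * (CN * Z + DN) := by noncomm_ring
      _ = AM * (W * (CN * Z + DN)) + BM * (CN * Z + DN) := by rw [hclear]
      _ = (AM * W + BM) * (CN * Z + DN) := by noncomm_ring
  refine ⟨cocycle, ?_⟩
  show ((M * N).toBlocks₁₁ * Z + (M * N).toBlocks₁₂) *
      ((M * N).toBlocks₂₁ * Z + (M * N).toBlocks₂₂)⁻¹ = (AM * W + BM) * (CM * W + DM)⁻¹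
  rw [cocycle, cocycleA, Matrix.mul_inv_rev, ← Matrix.mul_assoc, Matrix.mul_assoc _ _ (CN * Z + DN)⁻¹,
    Matrix.mul_inv_of_invertible, Matrix.mul_one]
end

section
/- Let λ > 3 be real. For integers m ≥ 0 and k ≥ 0 (with j = k/2 the half-integer spin label), define E(m,k) := 2(λ−2)(m + k/2 + λ − 1)/((m + λ − 1)(m + k + λ)). Then 0 < E(m,k) ≤ 2 for all m, k, and for each fixed m, E(m,k) → (λ−2)/(m+λ−1) as k → ∞. Hence the spectrum of the diagonal operator :Tr(E − A†A): is contained in [0,2] and the set σ_a = {(λ−2)/(m+λ−1) : m ∈ ℕ∪{0}} ∪ {0} consists of cluster points of its eigenvalues. -/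
/-!
Writing `a = m + λ - 1`, the eigenvalue splits as
`E(m,k) = (λ-2)/a + (λ-2)(a-1)/(a(m+k+λ))`, a constant plus a term that decays like `1/k`;
this gives the limit. The bound `E ≤ 2` is `(λ-2)(a + k/2) ≤ a(a + 1 + k)`, which holds
because `λ - 2 < a`.
-/

open Filter Topology

noncomputable section

/-- Here `k = 2j` is twice the spin label. -/
def traceEigenvalue (lam m k : ℝ) : ℝ :=
  2 * (lam - 2) * (m + k / 2 + lam - 1) / ((m + lam - 1) * (m + k + lam))

variable {lam m k : ℝ}

theorem traceEigenvalue_pos (hlam : 2 < lam) (hm : 0 ≤ m) (hk : 0 ≤ k) :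
    0 < traceEigenvalue lam m k := by
  unfold traceEigenvalue
  have hnum : 0 < m + k / 2 + lam - 1 := by linarith
  have ha : 0 < m + lam - 1 := by linarith
  have hb : 0 < m + k + lam := by linarith
  have hlam2 : 0 < lam - 2 := by linarith
  positivity

theorem traceEigenvalue_le_two (hlam : 1 < lam) (hm : 0 ≤ m) (hk : 0 ≤ k) :
    traceEigenvalue lam m k ≤ 2 := by
  unfold traceEigenvalue
  have ha : 0 < m + lam - 1 := by linarith
  have hb : 0 < m + k + lam := by linarith
  rw [div_le_iff₀ (mul_pos ha hb)]
  nlinarith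

theorem traceEigenvalue_eq_add (hlam : 1 < lam) (hm : 0 ≤ m) (hk : 0 ≤ k) :
    traceEigenvalue lam m k = (lam - 2) / (m + lam - 1) +
      (lam - 2) * (m + lam - 2) / ((m + lam - 1) * (m + k + lam)) := by
  have ha : m + lam - 1 ≠ 0 := by linarith
  have hb : m + k + lam ≠ 0 := by linarith
  unfold traceEigenvalue
  field_simp
  ring

theorem tendsto_traceEigenvalue_atTop (hlam : 1 < lam) (hm : 0 ≤ m) :
    Tendsto (traceEigenvalue lam m) atTop (𝓝 ((lam - 2) / (m + lam - 1))) := by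
  have ha : 0 < m + lam - 1 := by linarith
  have hden : Tendsto (fun k => (m + lam - 1) * (m + k + lam)) atTop atTop :=
    (tendsto_atTop_add_const_right _ _ (tendsto_atTop_add_const_left _ m tendsto_id)).const_mul_atTop ha
  have hdecay := (tendsto_const_nhds (x := (lam - 2) * (m + lam - 2))).div_atTop hden
  have hlim := (tendsto_const_nhds (x := (lam - 2) / (m + lam - 1))).add hdecay
  rw [add_zero] at hlim
  refine hlim.congr' ?_
  filter_upwards [eventually_ge_atTop 0] with k hk
  exact (traceEigenvalue_eq_add hlam hm hk).symm

end

/-- For real `λ > 3`, the eigenvalues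
`E(m,k) = 2(λ−2)(m + k/2 + λ − 1)/((m+λ−1)(m+k+λ))` of the diagonal operator
`:Tr(E − A†A):` satisfy `0 < E(m,k) ≤ 2`, and for fixed `m` they accumulate, as
`k → ∞`, at `(λ−2)/(m+λ−1)`; hence the spectrum lies in `[0,2]` and
`σ_a = {(λ−2)/(m+λ−1)} ∪ {0}` consists of cluster points of the eigenvalues. -/
theorem trace_operator_eigenvalues (lam : ℝ) (hlam : 3 < lam) :
    let E : ℕ → ℕ → ℝ := fun m k =>
      2 * (lam - 2) * ((m : ℝ) + (k : ℝ) / 2 + lam - 1) /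
        (((m : ℝ) + lam - 1) * ((m : ℝ) + (k : ℝ) + lam))
    (∀ m k : ℕ, 0 < E m k ∧ E m k ≤ 2) ∧
    (∀ m : ℕ, Filter.Tendsto (fun k : ℕ => E m k) Filter.atTop
      (nhds ((lam - 2) / ((m : ℝ) + lam - 1)))) := by
  intro E
  refine ⟨fun m k => ⟨?_, ?_⟩, fun m => ?_⟩
  · exact traceEigenvalue_pos (by linarith) m.cast_nonneg k.cast_nonneg
  · exact traceEigenvalue_le_two (by linarith) m.cast_nonneg k.cast_nonneg
  · exact (tendsto_traceEigenvalue_atTop (by linarith) m.cast_nonneg).comp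
      tendsto_natCast_atTop_atTop
end

section
/- Let λ ∈ ℝ and let W ∈ Mat₂ₓ₂(ℂ) be such that S := W − W† is invertible. Define the 4×4 block matrix X := iλ·[[(W + W†)S⁻¹, −2 W S⁻¹ W†], [2 S⁻¹, −I − 2 S⁻¹ W†]]. Then: (a) Tr X = 0; (b) X² = −λ²·I₄; and (c) X†η + ηX = 0, where η = i·[[0, I₂], [−I₂, 0]]. Hence the momentum map J_λ of the holomorphic model takes values in the Lie algebra su(2,2), on the orbit of elements with eigenvalues ±iλ. -/
/-!
With `U = (W; 1)`, `V = (1, -Wᴴ)` and `S = V U = W - Wᴴ`, the matrix `P = U S⁻¹ V` is idempotent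
(`P² = U S⁻¹ (V U) S⁻¹ V = P`) with trace `tr (S⁻¹ V U) = 2`, and `X = iλ (2P - 1)`. Hence
`(2P - 1)² = 1` gives `X² = -λ²`, and `tr X = iλ (2·2 - 4) = 0`. Finally `J U = -Vᴴ` and
`Uᴴ J = V` for the symplectic `J`, and `S` is skew-Hermitian, so `Pᴴ J = J P`; since `iλ` is
purely imaginary, this makes `X` skew-adjoint for `η = -iJ`.
-/

theorem IsIdempotentElem.two_mul_sub_one_mul_self {R : Type*} [Ring R] {p : R}
    (hp : IsIdempotentElem p) : (2 * p - 1) * (2 * p - 1) = 1 :=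
  calc (2 * p - 1) * (2 * p - 1) = 4 * (p * p - p) + 1 := by noncomm_ring
    _ = 1 := by rw [hp.eq, sub_self, mul_zero, zero_add]

namespace Matrix

variable {m n α : Type*} [Fintype m] [DecidableEq m] [Fintype n] [CommRing α]

theorem isIdempotentElem_mul_inv_mul (U : Matrix n m α) (V : Matrix m n α)
    (h : IsUnit (V * U).det) : IsIdempotentElem (U * (V * U)⁻¹ * V) :=
  calc U * (V * U)⁻¹ * V * (U * (V * U)⁻¹ * V)
      = U * ((V * U)⁻¹ * (V * U)) * (V * U)⁻¹ * V := by simp only [Matrix.mul_assoc]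
    _ = U * (V * U)⁻¹ * V := by rw [nonsing_inv_mul _ h, Matrix.mul_one]

theorem trace_mul_inv_mul (U : Matrix n m α) (V : Matrix m n α) (h : IsUnit (V * U).det) :
    trace (U * (V * U)⁻¹ * V) = Fintype.card m := by
  rw [Matrix.mul_assoc, trace_mul_comm, Matrix.mul_assoc, nonsing_inv_mul _ h, trace_one]

section Graph

variable [StarRing α] {W : Matrix m m α}

/-- The paper's `π_w`: the projection of `αᵐ ⊕ αᵐ` onto the column span `w` of `(W; 1)` along
that of `(Wᴴ; 1)`. -/
noncomputable def graphProjection (W : Matrix m m α) : Matrix (m ⊕ m) (m ⊕ m) α :=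
  fromRows W (1 : Matrix m m α) * (W - Wᴴ)⁻¹ * fromCols (1 : Matrix m m α) (-Wᴴ)

theorem fromCols_one_mul_fromRows_one :
    fromCols (1 : Matrix m m α) (-Wᴴ) * fromRows W (1 : Matrix m m α) = W - Wᴴ := by
  rw [fromCols_mul_fromRows, Matrix.one_mul, Matrix.mul_one, sub_eq_add_neg]

/-- `J_λ(W) = iλ (π_w - π_{w⊥}) = iλ (2 π_w - 1)`. -/
theorem fromBlocks_eq_two_smul_graphProjection_sub_one (hW : IsUnit (W - Wᴴ).det) :
    fromBlocks ((W + Wᴴ) * (W - Wᴴ)⁻¹) (-((2 : α) • (W * (W - Wᴴ)⁻¹ * Wᴴ)))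
        ((2 : α) • (W - Wᴴ)⁻¹) (-(1 + (2 : α) • ((W - Wᴴ)⁻¹ * Wᴴ))) =
      (2 : α) • graphProjection W - 1 := by
  have h1 : (W - Wᴴ) * (W - Wᴴ)⁻¹ = 1 := mul_nonsing_inv _ hW
  rw [graphProjection, fromRows_mul, fromRows_mul_fromCols, fromBlocks_smul, ← fromBlocks_one,
    sub_eq_add_neg (fromBlocks _ _ _ _), fromBlocks_neg, fromBlocks_add]
  congr 1
  · rw [Matrix.mul_one, ← sub_eq_add_neg, ← h1, two_smul, ← Matrix.add_mul, ← Matrix.sub_mul]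
    congr 1
    abel
  · simp
  · simp
  · simp [add_comm]

variable (hW : IsUnit (W - Wᴴ).det)
include hW

theorem isIdempotentElem_graphProjection : IsIdempotentElem (graphProjection W) := by
  rw [← fromCols_one_mul_fromRows_one] at hW
  rw [graphProjection, ← fromCols_one_mul_fromRows_one]
  exact isIdempotentElem_mul_inv_mul _ _ hW

theorem trace_graphProjection : trace (graphProjection W) = Fintype.card m := by
  rw [← fromCols_one_mul_fromRows_one] at hW
  rw [graphProjection, ← fromCols_one_mul_fromRows_one]
  exact trace_mul_inv_mul _ _ hW

theorem conjTranspose_graphProjection_mul_J :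
    (graphProjection W)ᴴ * J m α = J m α * graphProjection W := by
  have hinv : (W - Wᴴ)⁻¹ᴴ = -(W - Wᴴ)⁻¹ := by
    rw [conjTranspose_nonsing_inv, conjTranspose_sub, conjTranspose_conjTranspose, ← neg_sub]
    exact inv_eq_right_inv (by rw [neg_mul_neg, mul_nonsing_inv _ hW])
  have hleft : J m α * fromRows W (1 : Matrix m m α) = -(fromCols (1 : Matrix m m α) (-Wᴴ))ᴴ := by
    rw [J, fromBlocks_mul_fromRows, conjTranspose_fromCols_eq_fromRows_conjTranspose, fromRows_neg]
    simp
  have hright : (fromRows W (1 : Matrix m m α))ᴴ * J m α = fromCols (1 : Matrix m m α) (-Wᴴ) := by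
    rw [conjTranspose_fromRows_eq_fromCols_conjTranspose, J, fromCols_mul_fromBlocks]
    simp
  simp only [graphProjection, conjTranspose_mul, hinv, Matrix.mul_assoc, hright,
    ← Matrix.mul_assoc (J m α), hleft]
  simp only [Matrix.mul_neg, Matrix.neg_mul]

theorem two_smul_graphProjection_sub_one_mul_self :
    ((2 : α) • graphProjection W - 1) * ((2 : α) • graphProjection W - 1) = 1 := by
  rw [two_smul, ← two_mul]
  exact (isIdempotentElem_graphProjection hW).two_mul_sub_one_mul_self

theorem trace_two_smul_graphProjection_sub_one :
    trace ((2 : α) • graphProjection W - 1) = 0 := by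
  rw [trace_sub, trace_smul, trace_graphProjection hW, trace_one, Fintype.card_sum, smul_eq_mul]
  push_cast
  ring

theorem conjTranspose_two_smul_graphProjection_sub_one_mul_J :
    ((2 : α) • graphProjection W - 1)ᴴ * J m α = J m α * ((2 : α) • graphProjection W - 1) := by
  rw [conjTranspose_sub, conjTranspose_smul, conjTranspose_one, Matrix.sub_mul, Matrix.mul_sub,
    Matrix.smul_mul, Matrix.mul_smul, conjTranspose_graphProjection_mul_J hW, Matrix.one_mul,
    Matrix.mul_one, star_ofNat]

end Graph

end Matrix

open Matrix

/-- For real `λ` and `W` with `S = W − Wᴴ` invertible, the block matrix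
`X = iλ [[(W+Wᴴ)S⁻¹, −2WS⁻¹Wᴴ],[2S⁻¹, −I − 2S⁻¹Wᴴ]]` (the value `J_λ(W)` of the
momentum map of the holomorphic model) satisfies (a) `Tr X = 0`,
(b) `X² = −λ² I₄`, and (c) `Xᴴ η + η X = 0` where `η = i[[0,I],[−I,0]]`; hence
`X ∈ su(2,2)` lies on the orbit with eigenvalues `±iλ`. -/
theorem momentum_map_in_su22 (lam : ℝ) (W : Matrix (Fin 2) (Fin 2) ℂ)
    (hS : IsUnit (W - Wᴴ)) :
    let S : Matrix (Fin 2) (Fin 2) ℂ := W - Wᴴ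
    let X : Matrix (Fin 2 ⊕ Fin 2) (Fin 2 ⊕ Fin 2) ℂ :=
      (Complex.I * (lam : ℂ)) •
        fromBlocks ((W + Wᴴ) * S⁻¹) (-((2 : ℂ) • (W * S⁻¹ * Wᴴ)))
          ((2 : ℂ) • S⁻¹) (-(1 + (2 : ℂ) • (S⁻¹ * Wᴴ)))
    let η : Matrix (Fin 2 ⊕ Fin 2) (Fin 2 ⊕ Fin 2) ℂ :=
      Complex.I • fromBlocks 0 1 (-1) 0
    X.trace = 0 ∧
    X * X = (-((lam : ℂ) ^ 2)) • (1 : Matrix (Fin 2 ⊕ Fin 2) (Fin 2 ⊕ Fin 2) ℂ) ∧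
    Xᴴ * η + η * X = 0 := by
  intro S X η
  have hW : IsUnit (W - Wᴴ).det := (isUnit_iff_isUnit_det _).mp hS
  have hX : X = (Complex.I * lam) • ((2 : ℂ) • graphProjection W - 1) :=
    congrArg ((Complex.I * lam) • ·) (fromBlocks_eq_two_smul_graphProjection_sub_one hW)
  have hη : η = -(Complex.I • J (Fin 2) ℂ) := by
    rw [← smul_neg, J, fromBlocks_neg, neg_neg, neg_zero]
  have hc : star (Complex.I * lam) = -(Complex.I * lam) := by simp
  refine ⟨?_, ?_, ?_⟩
  · rw [hX, trace_smul, trace_two_smul_graphProjection_sub_one hW, smul_zero]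
  · rw [hX, smul_mul_smul_comm, two_smul_graphProjection_sub_one_mul_self hW, mul_mul_mul_comm,
      Complex.I_mul_I, neg_one_mul, sq]
  · rw [hX, hη, conjTranspose_smul, hc, Matrix.mul_neg, Matrix.neg_mul, smul_mul_smul_comm,
      smul_mul_smul_comm, conjTranspose_two_smul_graphProjection_sub_one_mul_J hW, neg_mul,
      mul_comm (Complex.I * lam), neg_smul, neg_neg, add_neg_cancel]
end
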